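/- Let u : ℝ^m → ℝ be a smooth nonnegative function satisfying Δu ≥ k·u^a on ℝ^m for constants k > 0 and a > 1. Then u ≡ 0. -/

import Mathlib

open scoped ContDiff

/-- Second derivative test: a smooth function with a local max at 0 has `g'' 0 ≤ 0`. -/
theorem secondDeriv_nonpos_of_isLocalMax {g : ℝ → ℝ} (hg : ContDiff ℝ ∞ g)
    (hmax : IsLocalMax g 0) : deriv (deriv g) 0 ≤ 0 := by
  by_contra h
  push_neg at h
  have hg1 : ContDiff ℝ ∞ (deriv g) := (contDiff_infty_iff_deriv.mp hg).2
  have hg2 : Continuous (deriv (deriv g)) := (contDiff_infty_iff_deriv.mp hg1).2.continuous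
  -- positivity of g'' on a neighborhood
  obtain ⟨δ, hδ, hpos⟩ : ∃ δ > 0, ∀ t ∈ Metric.ball (0:ℝ) δ, 0 < deriv (deriv g) t := by
    have := hg2.continuousAt (x := 0)
    rcases Metric.continuousAt_iff.mp this (deriv (deriv g) 0) h with ⟨δ, hδ, hd⟩
    refine ⟨δ, hδ, fun t ht => ?_⟩
    have := hd (Metric.mem_ball.mp ht)
    have := abs_lt.mp (by simpa [Real.dist_eq] using this)
    linarith [this.1]
  have hmono : StrictMonoOn (deriv g) (Set.Icc (-(δ/2)) (δ/2)) := by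
    apply strictMonoOn_of_deriv_pos (convex_Icc _ _) hg1.continuous.continuousOn
    intro t ht
    rw [interior_Icc] at ht
    refine hpos t ?_
    simp only [Metric.mem_ball, Real.dist_eq, sub_zero]
    rw [abs_lt]; constructor <;> [linarith [ht.1]; linarith [ht.2]]
  have h0 : deriv g 0 = 0 := hmax.deriv_eq_zero
  have hgpos : ∀ t ∈ Set.Ioc (0:ℝ) (δ/2), 0 < deriv g t := by
    intro t ht
    have := hmono (by constructor <;> [linarith; linarith] : (0:ℝ) ∈ Set.Icc (-(δ/2)) (δ/2))
      (by constructor <;> [linarith [ht.1]; linarith [ht.2]]) ht.1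
    rwa [h0] at this
  have hmono2 : StrictMonoOn g (Set.Icc 0 (δ/2)) := by
    apply strictMonoOn_of_deriv_pos (convex_Icc _ _) hg.continuous.continuousOn
    intro t ht
    rw [interior_Icc] at ht
    exact hgpos t ⟨ht.1, le_of_lt ht.2⟩
  rcases Metric.eventually_nhds_iff.mp hmax with ⟨ε, hε, hle⟩
  set t := min (δ/2) (ε/2) with htdef
  have ht1 : 0 < t := lt_min (by linarith) (by linarith)
  have : g 0 < g t := hmono2 ⟨le_refl 0, by linarith⟩ ⟨le_of_lt ht1, min_le_left _ _⟩ ht1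
  have : g t ≤ g 0 := hle (by simp [Real.dist_eq, abs_of_pos ht1]; have := min_le_right (δ/2) (ε/2); linarith)
  linarith


lemma second_deriv_mul {p w : ℝ → ℝ} (hp : ContDiff ℝ ∞ p) (hw : ContDiff ℝ ∞ w) :
    deriv (deriv (fun t => p t * w t)) 0 =
      deriv (deriv p) 0 * w 0 + 2 * deriv p 0 * deriv w 0 + p 0 * deriv (deriv w) 0 := by
  have hp1 : Differentiable ℝ p := hp.differentiable (by norm_num)
  have hw1 : Differentiable ℝ w := hw.differentiable (by norm_num)
  have hp' : ContDiff ℝ ∞ (deriv p) := (contDiff_infty_iff_deriv.mp hp).2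
  have hw' : ContDiff ℝ ∞ (deriv w) := (contDiff_infty_iff_deriv.mp hw).2
  have h1 : deriv (fun t => p t * w t) = fun t => deriv p t * w t + p t * deriv w t :=
    funext fun t => deriv_mul (hp1 t) (hw1 t)
  rw [h1, deriv_fun_add (f := fun t => deriv p t * w t) (g := fun t => p t * deriv w t)
      ((((hp'.differentiable (by norm_num)) 0).mul (hw1 0)))
      (((hp1 0).mul ((hw'.differentiable (by norm_num)) 0))),
    deriv_fun_mul ((hp'.differentiable (by norm_num)) 0) (hw1 0),
    deriv_fun_mul (hp1 0) ((hw'.differentiable (by norm_num)) 0)]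
  ring

lemma first_deriv_mul {p w : ℝ → ℝ} (hp : ContDiff ℝ ∞ p) (hw : ContDiff ℝ ∞ w) :
    deriv (fun t => p t * w t) 0 = deriv p 0 * w 0 + p 0 * deriv w 0 :=
  deriv_mul ((hp.differentiable (by norm_num)) 0) ((hw.differentiable (by norm_num)) 0)

lemma poly_contDiff (c b : ℝ) (n : ℕ) :
    ContDiff ℝ ∞ (fun t : ℝ => (c - 2*b*t - t^2)^n) := by fun_prop

lemma poly_deriv (c b : ℝ) (n : ℕ) (t : ℝ) :
    deriv (fun t : ℝ => (c - 2*b*t - t^2)^n) t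
      = (n : ℝ) * (c - 2*b*t - t^2)^(n-1) * (-(2*b) - 2*t) := by
  have hs : HasDerivAt (fun t : ℝ => c - 2*b*t - t^2) (-(2*b) - 2*t) t := by
    have h1 : HasDerivAt (fun t : ℝ => 2*b*t) (2*b) t := by
      simpa using (hasDerivAt_id t).const_mul (2*b)
    have h2 : HasDerivAt (fun t : ℝ => t^2) (2*t) t := by
      simpa using hasDerivAt_pow 2 t
    simpa using ((h1.const_sub c).fun_sub h2)
  exact (hs.pow n).deriv

lemma poly_deriv2 (c b : ℝ) (n : ℕ) (hn : 2 ≤ n) :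
    deriv (deriv (fun t : ℝ => (c - 2*b*t - t^2)^n)) 0
      = (n:ℝ)*((n:ℝ)-1)*c^(n-2)*(4*b^2) - 2*(n:ℝ)*c^(n-1) := by
  have h1 : deriv (fun t : ℝ => (c - 2*b*t - t^2)^n)
      = fun t => (n : ℝ) * (c - 2*b*t - t^2)^(n-1) * (-(2*b) - 2*t) :=
    funext (poly_deriv c b n)
  rw [h1]
  have hs : HasDerivAt (fun t : ℝ => c - 2*b*t - t^2) (-(2*b) - 2*0) 0 := by
    have h1' : HasDerivAt (fun t : ℝ => 2*b*t) (2*b) 0 := by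
      simpa using (hasDerivAt_id 0).const_mul (2*b)
    have h2 : HasDerivAt (fun t : ℝ => t^2) (2*0) 0 := by
      simpa using hasDerivAt_pow 2 (0:ℝ)
    simpa using ((h1'.const_sub c).fun_sub h2)
  have hA : HasDerivAt (fun t : ℝ => (n : ℝ) * (c - 2*b*t - t^2)^(n-1))
      ((n:ℝ) * (((n-1 : ℕ) : ℝ) * (c - 2*b*0 - 0^2)^(n-1-1) * (-(2*b) - 2*0))) 0 :=
    ((hs.pow (n-1)).const_mul _)
  have hB : HasDerivAt (fun t : ℝ => -(2*b) - 2*t) (-2 : ℝ) 0 := by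
    have : HasDerivAt (fun t : ℝ => 2*t) (2:ℝ) 0 := by
      simpa using (hasDerivAt_id 0).const_mul (2:ℝ)
    simpa using this.const_sub (-(2*b))
  have := (hA.fun_mul hB).deriv
  rw [this]
  have e1 : n - 1 - 1 = n - 2 := by omega
  have e2 : ((n-1 : ℕ) : ℝ) = (n:ℝ) - 1 := by
    have : 1 ≤ n := by omega
    push_cast [this]; ring
  simp only [e1, e2]
  ring


section helpers
variable {E : Type*} [NormedAddCommGroup E] [NormedSpace ℝ E]

lemma line_hasDerivAt (x v : E) (t : ℝ) : HasDerivAt (fun s : ℝ => x + s • v) v t := by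
  simpa using ((hasDerivAt_id t).smul_const v).const_add x

lemma line_contDiff {f : E → ℝ} (hf : ContDiff ℝ ∞ f) (x v : E) :
    ContDiff ℝ ∞ (fun t : ℝ => f (x + t • v)) :=
  hf.comp (contDiff_const.add (contDiff_id.smul contDiff_const))

lemma line_deriv {f : E → ℝ} (hf : ContDiff ℝ ∞ f) (x v : E) (t : ℝ) :
    deriv (fun s : ℝ => f (x + s • v)) t = fderiv ℝ f (x + t • v) v :=
  (((hf.differentiable (by norm_num)) _).hasFDerivAt.comp_hasDerivAt t (line_hasDerivAt x v t)).deriv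

lemma line_deriv2 {f : E → ℝ} (hf : ContDiff ℝ ∞ f) (x v : E) :
    deriv (deriv (fun s : ℝ => f (x + s • v))) 0 = iteratedFDeriv ℝ 2 f x ![v, v] := by
  rw [iteratedFDeriv_two_apply]
  have h1 : deriv (fun s : ℝ => f (x + s • v)) = fun t => fderiv ℝ f (x + t • v) v :=
    funext (line_deriv hf x v)
  rw [h1]
  have hf' : ContDiff ℝ ∞ (fderiv ℝ f) := (contDiff_infty_iff_fderiv.mp hf).2
  have hline0 : HasDerivAt (fun s : ℝ => x + s • v) v 0 := line_hasDerivAt x v 0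
  have hD : HasDerivAt (fun t : ℝ => fderiv ℝ f (x + t • v)) (fderiv ℝ (fderiv ℝ f) x v) 0 := by
    have h0 : HasFDerivAt (fderiv ℝ f) (fderiv ℝ (fderiv ℝ f) x) x :=
      ((hf'.differentiable (by norm_num)) x).hasFDerivAt
    have h0' : HasFDerivAt (fderiv ℝ f) (fderiv ℝ (fderiv ℝ f) x) (x + (0:ℝ) • v) := by
      simpa using h0
    exact h0'.comp_hasDerivAt 0 hline0
  have := hD.clm_apply (hasDerivAt_const 0 v)
  simpa using this.deriv

end helpers

lemma norm_line_sq {m : ℕ} (y : EuclideanSpace ℝ (Fin m)) (i : Fin m) (t : ℝ) :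
    ‖y + t • EuclideanSpace.single i (1:ℝ)‖^2 = ‖y‖^2 + 2*(y i)*t + t^2 := by
  rw [@norm_add_sq_real]
  have h1 : (inner ℝ y (t • EuclideanSpace.single i (1:ℝ)) : ℝ) = t * y i := by
    rw [real_inner_smul_right, EuclideanSpace.inner_single_right]
    simp
  have h2 : ‖t • EuclideanSpace.single i (1:ℝ)‖^2 = t^2 := by
    rw [norm_smul]
    simp [Real.norm_eq_abs, sq_abs]
  rw [h1, h2]; ring

lemma sum_coord_sq {m : ℕ} (y : EuclideanSpace ℝ (Fin m)) :
    ∑ i : Fin m, (y i)^2 = ‖y‖^2 := by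
  have := real_inner_self_eq_norm_sq y
  rw [← this, PiLp.inner_apply]
  simp [RCLike.inner_apply, sq]

/-- The key per-coordinate inequality at the interior maximum point `q` of the
test function `x ↦ (ρ² - ‖x-x₀‖²)ⁿ u x`. -/
lemma coord_ineq {m : ℕ} {u : EuclideanSpace ℝ (Fin m) → ℝ} (hu : ContDiff ℝ ∞ u)
    {x₀ q : EuclideanSpace ℝ (Fin m)} {ρ : ℝ} (hρ : 0 < ρ) {n : ℕ} (hn : 2 ≤ n)
    (hmaxon : ∀ x ∈ Metric.closedBall x₀ ρ,
      (ρ^2 - ‖x - x₀‖^2)^n * u x ≤ (ρ^2 - ‖q - x₀‖^2)^n * u q)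
    (hc : 0 < ρ^2 - ‖q - x₀‖^2) (huq : 0 < u q) (i : Fin m) :
    (ρ^2 - ‖q - x₀‖^2)^n *
        iteratedFDeriv ℝ 2 u q ![EuclideanSpace.single i 1, EuclideanSpace.single i 1]
      ≤ 2*(n:ℝ)*(ρ^2 - ‖q - x₀‖^2)^(n-1)*u q
        + (8*(n:ℝ)^2 - 4*(n:ℝ)*((n:ℝ)-1)) * (ρ^2 - ‖q - x₀‖^2)^(n-2) * u q * ((q - x₀) i)^2 := by
  set y := q - x₀ with hy
  set c := ρ^2 - ‖y‖^2 with hcdef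
  set v := EuclideanSpace.single i (1:ℝ) with hv
  set b := y i with hb
  have hvnorm : ‖v‖ = 1 := by simp [hv]
  have hyρ : ‖y‖ < ρ := by
    by_contra hcon
    push_neg at hcon
    nlinarith [norm_nonneg y]
  have hline : ∀ t : ℝ, q + t • v - x₀ = y + t • v := by
    intro t; rw [hy]; abel
  have key : ∀ t : ℝ, ρ^2 - ‖q + t • v - x₀‖^2 = c - 2*b*t - t^2 := by
    intro t
    rw [hline t, norm_line_sq, hcdef, hb]
    ring
  set p : ℝ → ℝ := fun t => (c - 2*b*t - t^2)^n with hp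
  set w : ℝ → ℝ := fun t => u (q + t • v) with hw
  have hpC : ContDiff ℝ ∞ p := poly_contDiff c b n
  have hwC : ContDiff ℝ ∞ w := line_contDiff hu q v
  have hg0 : p 0 * w 0 = c^n * u q := by
    simp only [hp, hw]
    norm_num
  -- the local maximum
  have hmax : IsLocalMax (fun t : ℝ => p t * w t) 0 := by
    unfold IsLocalMax IsMaxFilter
    rw [Metric.eventually_nhds_iff]
    refine ⟨ρ - ‖y‖, by linarith, fun {t} ht => ?_⟩
    have htabs : |t| < ρ - ‖y‖ := by simpa [Real.dist_eq] using ht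
    have hmem : q + t • v ∈ Metric.closedBall x₀ ρ := by
      rw [Metric.mem_closedBall, dist_eq_norm, hline t]
      calc ‖y + t • v‖ ≤ ‖y‖ + ‖t • v‖ := norm_add_le _ _
        _ = ‖y‖ + |t| := by rw [norm_smul, hvnorm, Real.norm_eq_abs, mul_one]
        _ ≤ ρ := by linarith
    have := hmaxon _ hmem
    rw [key t] at this
    show p t * w t ≤ p 0 * w 0
    rw [hg0]; exact this
  -- values of p and its derivatives at 0
  have hp0 : p 0 = c^n := by simp only [hp]; norm_num
  have hw0 : w 0 = u q := by simp only [hw]; norm_num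
  have hp'0 : deriv p 0 = (n:ℝ) * c^(n-1) * (-(2*b)) := by
    simp only [hp]
    rw [poly_deriv c b n 0]
    norm_num
  have hp''0 : deriv (deriv p) 0 = (n:ℝ)*((n:ℝ)-1)*c^(n-2)*(4*b^2) - 2*(n:ℝ)*c^(n-1) := by
    simp only [hp]
    exact poly_deriv2 c b n hn
  have hcn1 : (c:ℝ)^(n-1) ≠ 0 := pow_ne_zero _ (ne_of_gt hc)
  have hcc : c^(n-1) = c^(n-2) * c := by
    rw [← pow_succ]; congr 1; omega
  -- first derivative vanishes: solve for deriv w 0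
  have h1 : deriv (fun t => p t * w t) 0 = 0 := hmax.deriv_eq_zero
  rw [first_deriv_mul hpC hwC, hp0, hw0, hp'0] at h1
  have hW : deriv w 0 = 2*(n:ℝ)*b*(u q)/c := by
    have h2 : c^(n-1) * (c * deriv w 0 - 2*(n:ℝ)*b*u q) = 0 := by
      have hcsplit : c^n = c^(n-1) * c := by rw [← pow_succ]; congr 1; omega
      rw [hcsplit] at h1
      linear_combination h1
    rcases mul_eq_zero.mp h2 with h | h
    · exact absurd h hcn1
    · rw [eq_div_iff (ne_of_gt hc)]; linarith
  -- second derivative test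
  have h2 := secondDeriv_nonpos_of_isLocalMax (hpC.mul hwC) hmax
  rw [second_deriv_mul hpC hwC, hp''0, hp'0, hp0, hw0, hW] at h2
  have hS : deriv (deriv w) 0
      = iteratedFDeriv ℝ 2 u q ![EuclideanSpace.single i 1, EuclideanSpace.single i 1] := by
    simp only [hw, hv]
    exact line_deriv2 hu q v
  rw [hS] at h2
  have e : 2 * ((n:ℝ) * c^(n-1) * (-(2*b))) * (2*(n:ℝ)*b*(u q)/c)
      = -(8*(n:ℝ)^2*b^2*c^(n-2)*u q) := by
    rw [hcc]
    field_simp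
    ring
  rw [e] at h2
  rw [hcc] at h2 ⊢
  nlinarith [h2]

open EuclideanSpace in
/-- The Laplacian on Euclidean space `ℝᵐ`: the sum of pure second derivatives in the
coordinate directions. -/
noncomputable def lap {m : ℕ} (f : EuclideanSpace ℝ (Fin m) → ℝ)
    (x : EuclideanSpace ℝ (Fin m)) : ℝ :=
  ∑ i : Fin m, iteratedFDeriv ℝ 2 f x ![single i 1, single i 1]

set_option maxHeartbeats 1000000 in
/-- **Euclidean Liouville theorem.**  A smooth nonnegative function `u` on `ℝᵐ` with
`Δu ≥ k·u^a` for constants `k > 0`, `a > 1` vanishes identically. -/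
theorem liouville_euclidean {m : ℕ}
    (u : EuclideanSpace ℝ (Fin m) → ℝ) (hu : ContDiff ℝ (⊤ : ℕ∞) u)
    (hnonneg : ∀ x, 0 ≤ u x)
    (k a : ℝ) (hk : 0 < k) (ha : 1 < a)
    (hineq : ∀ x, k * u x ^ a ≤ lap u x) :
    ∀ x, u x = 0 := by
  intro x₀
  by_contra hne
  have hupos : 0 < u x₀ := (hnonneg x₀).lt_of_ne (Ne.symm hne)
  have huC : ContDiff ℝ ∞ u := hu.of_le (by simp)
  have ha' : 0 < a - 1 := by linarith
  -- choose the integer exponent n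
  obtain ⟨n, hn2, hna⟩ : ∃ n : ℕ, 2 ≤ n ∧ 2 ≤ (n : ℝ) * (a - 1) := by
    obtain ⟨n, hn⟩ := exists_nat_ge (2 / (a - 1) + 2)
    have hd : 0 ≤ 2 / (a - 1) := div_nonneg (by norm_num) ha'.le
    have hge : (2:ℝ) ≤ (n:ℝ) := by linarith
    refine ⟨n, by exact_mod_cast hge, ?_⟩
    have h2 : 2 / (a - 1) ≤ (n : ℝ) := by linarith
    calc (2:ℝ) = (2 / (a - 1)) * (a - 1) := by field_simp
      _ ≤ (n : ℝ) * (a - 1) := by nlinarith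
  set C : ℝ := 4*(n:ℝ)*((n:ℝ)+1) + 2*(m:ℝ)*(n:ℝ) with hCdef
  have hn0 : (2:ℝ) ≤ (n:ℝ) := by exact_mod_cast hn2
  have hC : 0 < C := by
    have hm0 : (0:ℝ) ≤ (m:ℝ) := Nat.cast_nonneg m
    nlinarith
  -- the key estimate for every radius
  have key : ∀ ρ : ℝ, 0 < ρ → u x₀ ^ (a - 1) ≤ C / (k * ρ^2) := by
    intro ρ hρ
    set F : EuclideanSpace ℝ (Fin m) → ℝ := fun x => (ρ^2 - ‖x - x₀‖^2)^n * u x with hF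
    have hFcont : Continuous F := by
      have h1 : Continuous u := huC.continuous
      fun_prop
    obtain ⟨q, hqB, hqmax⟩ := (isCompact_closedBall x₀ ρ).exists_isMaxOn
      ⟨x₀, Metric.mem_closedBall_self hρ.le⟩ hFcont.continuousOn
    have hmaxon : ∀ x ∈ Metric.closedBall x₀ ρ, F x ≤ F q := fun x hx => hqmax hx
    have hFx₀ : F x₀ = (ρ^2)^n * u x₀ := by simp [hF]
    have hFx₀pos : 0 < F x₀ := by rw [hFx₀]; positivity
    have hFqpos : 0 < F q := lt_of_lt_of_le hFx₀pos (hmaxon x₀ (Metric.mem_closedBall_self hρ.le))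
    have hqnorm : ‖q - x₀‖ ≤ ρ := by
      have := Metric.mem_closedBall.mp hqB
      rwa [dist_eq_norm] at this
    have hcnn : 0 ≤ ρ^2 - ‖q - x₀‖^2 := by nlinarith [norm_nonneg (q - x₀)]
    have huq : 0 < u q := by
      rcases lt_or_eq_of_le (hnonneg q) with h | h
      · exact h
      · have : F q = 0 := by simp [hF, ← h]
        linarith
    have hc : 0 < ρ^2 - ‖q - x₀‖^2 := by
      rcases lt_or_eq_of_le hcnn with h | h
      · exact h
      · have hXn : (ρ^2 - ‖q - x₀‖^2)^n = 0 := by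
          rw [← h]; exact zero_pow (by omega)
        have : F q = 0 := by simp [hF, hXn]
        linarith
    set c : ℝ := ρ^2 - ‖q - x₀‖^2 with hcdef
    have hcle : c ≤ ρ^2 := by
      rw [hcdef]; nlinarith [sq_nonneg ‖q - x₀‖]
    -- sum the coordinate inequalities
    have hsum : c^n * lap u q
        ≤ (m:ℝ) * (2*(n:ℝ)*c^(n-1)*u q)
          + (8*(n:ℝ)^2 - 4*(n:ℝ)*((n:ℝ)-1)) * c^(n-2) * u q * ‖q - x₀‖^2 := by
      have hcoord := fun i : Fin m =>
        coord_ineq huC hρ hn2 (by simpa [hF] using hmaxon) hc huq i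
      calc c^n * lap u q
          = ∑ i : Fin m, c^n *
              iteratedFDeriv ℝ 2 u q ![EuclideanSpace.single i 1, EuclideanSpace.single i 1] := by
            rw [lap, Finset.mul_sum]
        _ ≤ ∑ i : Fin m, (2*(n:ℝ)*c^(n-1)*u q
              + (8*(n:ℝ)^2 - 4*(n:ℝ)*((n:ℝ)-1)) * c^(n-2) * u q * ((q - x₀) i)^2) :=
            Finset.sum_le_sum (fun i _ => hcoord i)
        _ = (m:ℝ) * (2*(n:ℝ)*c^(n-1)*u q)
              + (8*(n:ℝ)^2 - 4*(n:ℝ)*((n:ℝ)-1)) * c^(n-2) * u q * ‖q - x₀‖^2 := by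
            rw [Finset.sum_add_distrib, Finset.sum_const, ← Finset.mul_sum, sum_coord_sq]
            simp [Finset.card_univ, nsmul_eq_mul]
    -- bound the right-hand side
    have hyle : ‖q - x₀‖^2 ≤ ρ^2 := by nlinarith
    have hrhs : (m:ℝ) * (2*(n:ℝ)*c^(n-1)*u q)
          + (8*(n:ℝ)^2 - 4*(n:ℝ)*((n:ℝ)-1)) * c^(n-2) * u q * ‖q - x₀‖^2
        ≤ C * ρ^2 * (c^(n-2) * u q) := by
      have hcc : c^(n-1) = c^(n-2) * c := by rw [← pow_succ]; congr 1; omega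
      rw [hcc]
      have hlin : (m:ℝ) * (2*(n:ℝ)*c) + (8*(n:ℝ)^2 - 4*(n:ℝ)*((n:ℝ)-1)) * ‖q - x₀‖^2
          ≤ C * ρ^2 := by
        have hm0 : (0:ℝ) ≤ (m:ℝ) := Nat.cast_nonneg m
        have haux : (0:ℝ) ≤ (n:ℝ) * (ρ^2 - c) := mul_nonneg (by linarith) (by linarith)
        have h1 : (m:ℝ) * (2*(n:ℝ)*c) ≤ (m:ℝ) * (2*(n:ℝ)*ρ^2) :=
          mul_le_mul_of_nonneg_left (by nlinarith [haux]) hm0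
        have h2 : (8*(n:ℝ)^2 - 4*(n:ℝ)*((n:ℝ)-1)) * ‖q - x₀‖^2
            ≤ (8*(n:ℝ)^2 - 4*(n:ℝ)*((n:ℝ)-1)) * ρ^2 :=
          mul_le_mul_of_nonneg_left hyle (by nlinarith)
        rw [hCdef]; nlinarith [h1, h2]
      have hfac : 0 ≤ c^(n-2) * u q := mul_nonneg (pow_nonneg hcnn _) (hnonneg q)
      calc (m:ℝ) * (2*(n:ℝ)*(c^(n-2)*c)*u q)
            + (8*(n:ℝ)^2 - 4*(n:ℝ)*((n:ℝ)-1)) * c^(n-2) * u q * ‖q - x₀‖^2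
          = ((m:ℝ) * (2*(n:ℝ)*c) + (8*(n:ℝ)^2 - 4*(n:ℝ)*((n:ℝ)-1)) * ‖q - x₀‖^2)
              * (c^(n-2) * u q) := by ring
        _ ≤ C * ρ^2 * (c^(n-2) * u q) := mul_le_mul_of_nonneg_right hlin hfac
    -- combine with the differential inequality
    have hlap : c^n * (k * u q ^ a) ≤ c^n * lap u q :=
      mul_le_mul_of_nonneg_left (hineq q) (pow_nonneg hcnn n)
    have hcn2 : c^n = c^(n-2) * c^2 := by rw [← pow_add]; congr 1; omega
    have hstep : c^2 * (k * u q ^ a) ≤ C * ρ^2 * u q := by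
      have h3 : c^(n-2) * (c^2 * (k * u q ^ a)) ≤ c^(n-2) * (C * ρ^2 * u q) := by
        calc c^(n-2) * (c^2 * (k * u q ^ a)) = c^n * (k * u q ^ a) := by rw [hcn2]; ring
          _ ≤ c^n * lap u q := hlap
          _ ≤ _ := le_trans hsum hrhs
          _ = c^(n-2) * (C * ρ^2 * u q) := by ring
      exact le_of_mul_le_mul_left h3 (pow_pos hc _)
    have hsplit : u q ^ a = u q ^ (a-1) * u q := by
      have h := Real.rpow_add huq (a-1) 1
      rw [Real.rpow_one] at h
      calc u q ^ a = u q ^ (a-1+1) := by norm_num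
        _ = u q ^ (a-1) * u q := h
    rw [hsplit] at hstep
    have hmain : k * c^2 * u q ^ (a-1) ≤ C * ρ^2 := by
      have : (k * c^2 * u q ^ (a-1)) * u q ≤ (C * ρ^2) * u q := by
        calc (k * c^2 * u q ^ (a-1)) * u q = c^2 * (k * (u q ^ (a-1) * u q)) := by ring
          _ ≤ C * ρ^2 * u q := hstep
          _ = (C * ρ^2) * u q := by ring
      exact le_of_mul_le_mul_right this huq
    -- raise F x₀ ≤ F q to the power a-1
    have hFle : (ρ^2)^n * u x₀ ≤ c^n * u q := by
      have := hmaxon x₀ (Metric.mem_closedBall_self hρ.le)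
      rw [hFx₀] at this
      simpa [hF] using this
    have hL : ((ρ^2)^n * u x₀) ^ (a-1) ≤ (c^n * u q) ^ (a-1) :=
      Real.rpow_le_rpow (by positivity) hFle ha'.le
    rw [Real.mul_rpow (by positivity) (hnonneg x₀), Real.mul_rpow (pow_nonneg hcnn n) huq.le]
      at hL
    set N : ℝ := (n:ℝ) * (a-1) with hNdef
    have hrw1 : ((ρ^2:ℝ)^n) ^ (a-1) = (ρ^2) ^ N := by
      rw [← Real.rpow_natCast (ρ^2) n, ← Real.rpow_mul (by positivity)]
    have hrw2 : ((c:ℝ)^n) ^ (a-1) = c ^ N := by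
      rw [← Real.rpow_natCast c n, ← Real.rpow_mul hcnn]
    rw [hrw1, hrw2] at hL
    -- bound u q ^ (a-1)
    have huqb : u q ^ (a-1) ≤ C * ρ^2 / (k * c^2) := by
      rw [le_div_iff₀ (by positivity)]
      nlinarith [hmain]
    have hL2 : (ρ^2) ^ N * u x₀ ^ (a-1) ≤ c ^ N * (C * ρ^2 / (k * c^2)) :=
      le_trans hL (mul_le_mul_of_nonneg_left huqb (Real.rpow_nonneg hcnn N))
    have hcN : c ^ N = c ^ (N - 2) * c^2 := by
      rw [show c^2 = c ^ (2:ℝ) by rw [show (2:ℝ) = ((2:ℕ):ℝ) by norm_num, Real.rpow_natCast],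
        ← Real.rpow_add hc]
      norm_num
    have hstep2 : c ^ N * (C * ρ^2 / (k * c^2)) = c ^ (N-2) * (C * ρ^2 / k) := by
      rw [hcN]
      field_simp
    rw [hstep2] at hL2
    have hcN2 : c ^ (N-2) ≤ (ρ^2) ^ (N-2) :=
      Real.rpow_le_rpow hcnn hcle (by linarith)
    have hL3 : (ρ^2) ^ N * u x₀ ^ (a-1) ≤ (ρ^2) ^ (N-2) * (C * ρ^2 / k) :=
      le_trans hL2 (mul_le_mul_of_nonneg_right hcN2 (by positivity))
    have hρN : (ρ^2:ℝ) ^ N = (ρ^2) ^ (N-2) * (ρ^2)^2 := by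
      rw [show (ρ^2)^2 = (ρ^2) ^ (2:ℝ) by
          rw [show (2:ℝ) = ((2:ℕ):ℝ) by norm_num, Real.rpow_natCast],
        ← Real.rpow_add (by positivity)]
      norm_num
    rw [hρN] at hL3
    have hρpos : (0:ℝ) < (ρ^2) ^ (N-2) := Real.rpow_pos_of_pos (by positivity) _
    have hL4 : (ρ^2)^2 * u x₀ ^ (a-1) ≤ C * ρ^2 / k := by
      have := hL3
      rw [show (ρ^2) ^ (N-2) * (ρ^2)^2 * u x₀ ^ (a-1)
          = (ρ^2) ^ (N-2) * ((ρ^2)^2 * u x₀ ^ (a-1)) by ring] at this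
      exact le_of_mul_le_mul_left this hρpos
    rw [le_div_iff₀ (by positivity)]
    have h6 : (u x₀ ^ (a-1) * (k*ρ^2)) * ρ^2 ≤ C * ρ^2 := by
      calc (u x₀ ^ (a-1) * (k*ρ^2)) * ρ^2 = ((ρ^2)^2 * u x₀ ^ (a-1)) * k := by ring
        _ ≤ (C * ρ^2 / k) * k := mul_le_mul_of_nonneg_right hL4 hk.le
        _ = C * ρ^2 := by field_simp
    exact le_of_mul_le_mul_right h6 (pow_pos hρ 2)
  -- conclude
  set t : ℝ := u x₀ ^ (a-1) with htdef
  have htpos : 0 < t := Real.rpow_pos_of_pos hupos _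
  have hfrac : 0 < (C+1) / (k*t) := by positivity
  set ρ : ℝ := Real.sqrt ((C+1)/(k*t)) with hρdef
  have hρpos : 0 < ρ := Real.sqrt_pos.mpr hfrac
  have hρsq : ρ^2 = (C+1)/(k*t) := Real.sq_sqrt hfrac.le
  have hkey := key ρ hρpos
  rw [hρsq] at hkey
  have hkt : (0:ℝ) < k * t := by positivity
  have : k * ((C+1)/(k*t)) = (C+1)/t := by field_simp
  rw [this] at hkey
  have h2 : t * ((C+1)/t) ≤ C := by
    rw [le_div_iff₀ (by positivity : (0:ℝ) < (C+1)/t)] at hkey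
    exact hkey
  rw [← mul_div_assoc, mul_div_cancel_left₀ _ (ne_of_gt htpos)] at h2
  linarith
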